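/- arXiv:1504.06951 — 9 statements merged into one kernel-verified Lean document; each statement's English description precedes it below -/
import Mathlib

section
/- Let φ₀⁺ > 0 and γ ≥ 0, and assume global electroneutrality. Then there exists a unique pair (t, c) of real numbers satisfying: (1) φ₀⁺ - t = γ (f(t - c) - f(0))^{1/2}; (2) f(t - c) = f(-t - c); (3) |c| < t ≤ φ₀⁺. -/
/-!
Electroneutrality makes `f'(s) > 0` for `s > 0`, since there `e^{a s} > 1 > e^{-b s}`; as
`s ↦ f (-s)` is a function of the same kind, `f` is a valley: strictly decreasing on `(-∞, 0]`,
strictly increasing on `[0, ∞)` and unbounded at both ends. Put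
`u = t - c` and `w = t + c`. Then (3) says `u, w > 0`, and (2) says `f (-w) = f u`, i.e. `w` is the
mirror point `m u` of `u` across the bottom of the valley. Condition (1) becomes `H u = φ₀` for
`H u = (u + m u) / 2 + γ √(f u - f 0)`. The map `m` is a monotone bijection, hence continuous, so
`H` is continuous and strictly increasing on `[0, ∞)` with `H 0 = 0` and `H u ≥ u / 2`, and
`H u = φ₀` has exactly one solution.
-/

open Real Filter Set Function Finset

structure IsValley (F : ℝ → ℝ) : Prop where
  continuous : Continuous F
  strictAntiOn : StrictAntiOn F (Iic 0)
  strictMonoOn : StrictMonoOn F (Ici 0)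
  tendsto_atBot : Tendsto F atBot atTop
  tendsto_atTop : Tendsto F atTop atTop

/-- The branch `u < 0` only serves to make `mirror F` a monotone surjection of `ℝ`, hence
continuous. -/
noncomputable def mirror (F : ℝ → ℝ) (u : ℝ) : ℝ :=
  if u < 0 then u else -invFunOn F (Iic 0) (F u)

/-- Equation (1) reads `φ₀ = boundaryPotential F γ (t - c)` once `t + c = mirror F (t - c)`. -/
noncomputable def boundaryPotential (F : ℝ → ℝ) (γ u : ℝ) : ℝ :=
  (u + mirror F u) / 2 + γ * √(F u - F 0)

theorem mirror_of_neg {F : ℝ → ℝ} {u : ℝ} (hu : u < 0) : mirror F u = u := if_pos hu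

namespace IsValley

variable {F : ℝ → ℝ} (hF : IsValley F)
include hF

theorem apply_zero_le (u : ℝ) : F 0 ≤ F u := by
  rcases le_total u 0 with hu | hu
  · exact hF.strictAntiOn.antitoneOn hu self_mem_Iic hu
  · exact hF.strictMonoOn.monotoneOn self_mem_Ici hu hu

theorem mirror_spec {u : ℝ} (hu : 0 ≤ u) : 0 ≤ mirror F u ∧ F (-mirror F u) = F u := by
  have hmem : F u ∈ F '' Iic 0 :=
    intermediate_value_Iic' hF.continuous.continuousOn hF.tendsto_atBot (hF.apply_zero_le u)
  rw [mirror, if_neg hu.not_gt, neg_neg]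
  exact ⟨neg_nonneg.2 (invFunOn_mem hmem), invFunOn_eq hmem⟩

theorem eq_mirror {u x : ℝ} (hu : 0 ≤ u) (hx : 0 ≤ x) (h : F (-x) = F u) : x = mirror F u := by
  obtain ⟨hm, hFm⟩ := hF.mirror_spec hu
  exact neg_injective <|
    hF.strictAntiOn.injOn (neg_nonpos.2 hx) (neg_nonpos.2 hm) (h.trans hFm.symm)

theorem mirror_zero : mirror F 0 = 0 :=
  (hF.eq_mirror le_rfl le_rfl (by rw [neg_zero])).symm

theorem mirror_le_mirror_iff {u₁ u₂ : ℝ} (hu₁ : 0 ≤ u₁) (hu₂ : 0 ≤ u₂) :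
    mirror F u₁ ≤ mirror F u₂ ↔ u₁ ≤ u₂ := by
  obtain ⟨hm₁, hFm₁⟩ := hF.mirror_spec hu₁
  obtain ⟨hm₂, hFm₂⟩ := hF.mirror_spec hu₂
  rw [← neg_le_neg_iff, ← hF.strictAntiOn.le_iff_ge (neg_nonpos.2 hm₁) (neg_nonpos.2 hm₂),
    hFm₁, hFm₂, hF.strictMonoOn.le_iff_le hu₁ hu₂]

theorem mirror_pos {u : ℝ} (hu : 0 < u) : 0 < mirror F u := by
  rw [← hF.mirror_zero, lt_iff_not_ge, hF.mirror_le_mirror_iff hu.le le_rfl, not_le]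
  exact hu

theorem monotone_mirror : Monotone (mirror F) := by
  intro u₁ u₂ h
  rcases lt_or_ge u₂ 0 with hu₂ | hu₂
  · rw [mirror_of_neg hu₂, mirror_of_neg (h.trans_lt hu₂)]
    exact h
  rcases lt_or_ge u₁ 0 with hu₁ | hu₁
  · rw [mirror_of_neg hu₁]
    exact hu₁.le.trans (hF.mirror_spec hu₂).1
  · exact (hF.mirror_le_mirror_iff hu₁ hu₂).2 h

theorem surjective_mirror : Surjective (mirror F) := by
  intro y
  rcases lt_or_ge y 0 with hy | hy
  · exact ⟨y, mirror_of_neg hy⟩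
  obtain ⟨u, hu, hFu⟩ := intermediate_value_Ici hF.continuous.continuousOn hF.tendsto_atTop
    (hF.apply_zero_le (-y))
  exact ⟨u, (hF.eq_mirror hu hy hFu.symm).symm⟩

theorem continuous_mirror : Continuous (mirror F) :=
  hF.monotone_mirror.continuous_of_surjective hF.surjective_mirror

theorem continuous_boundaryPotential (γ : ℝ) : Continuous (boundaryPotential F γ) := by
  have := hF.continuous
  have := hF.continuous_mirror
  unfold boundaryPotential
  fun_prop

theorem boundaryPotential_zero (γ : ℝ) : boundaryPotential F γ 0 = 0 := by
  simp [boundaryPotential, hF.mirror_zero]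

theorem strictMonoOn_boundaryPotential {γ : ℝ} (hγ : 0 ≤ γ) :
    StrictMonoOn (boundaryPotential F γ) (Ici 0) := by
  intro u₁ hu₁ u₂ hu₂ h
  have hm : mirror F u₁ ≤ mirror F u₂ := hF.monotone_mirror h.le
  have hFu : F u₁ ≤ F u₂ := hF.strictMonoOn.monotoneOn hu₁ hu₂ h.le
  have hsqrt : γ * √(F u₁ - F 0) ≤ γ * √(F u₂ - F 0) := by gcongr
  unfold boundaryPotential
  linarith

theorem half_le_boundaryPotential {γ u : ℝ} (hγ : 0 ≤ γ) (hu : 0 ≤ u) :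
    u / 2 ≤ boundaryPotential F γ u := by
  have := (hF.mirror_spec hu).1
  have : 0 ≤ γ * √(F u - F 0) := by positivity
  unfold boundaryPotential
  linarith

theorem exists_pos_boundaryPotential_eq {φ₀ γ : ℝ} (hφ₀ : 0 < φ₀) (hγ : 0 ≤ γ) :
    ∃ u, 0 < u ∧ boundaryPotential F γ u = φ₀ := by
  have hφ₀_mem : φ₀ ∈ Icc (boundaryPotential F γ 0) (boundaryPotential F γ (2 * φ₀)) := by
    rw [hF.boundaryPotential_zero]
    have := hF.half_le_boundaryPotential hγ (u := 2 * φ₀) (by positivity)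
    constructor <;> linarith
  obtain ⟨u, hu, hHu⟩ := intermediate_value_Icc (by positivity)
    (hF.continuous_boundaryPotential γ).continuousOn hφ₀_mem
  refine ⟨u, hu.1.lt_of_ne ?_, hHu⟩
  rintro rfl
  rw [hF.boundaryPotential_zero] at hHu
  exact hφ₀.ne hHu

theorem existsUnique_pair {φ₀ γ : ℝ} (hφ₀ : 0 < φ₀) (hγ : 0 ≤ γ) :
    ∃! p : ℝ × ℝ,
      φ₀ - p.1 = γ * √(F (p.1 - p.2) - F 0) ∧
      F (p.1 - p.2) = F (-p.1 - p.2) ∧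
      |p.2| < p.1 ∧ p.1 ≤ φ₀ := by
  obtain ⟨u, hu, hHu⟩ := hF.exists_pos_boundaryPotential_eq hφ₀ hγ
  have hm := hF.mirror_pos hu
  have hFm := (hF.mirror_spec hu.le).2
  set m := mirror F u
  have hsqrt : 0 ≤ γ * √(F u - F 0) := by positivity
  have hφ₀_eq : (u + m) / 2 + γ * √(F u - F 0) = φ₀ := hHu
  refine ⟨((u + m) / 2, (m - u) / 2), ⟨?_, ?_, ?_, ?_⟩, ?_⟩
  · rw [show (u + m) / 2 - (m - u) / 2 = u by ring]
    linarith
  · rw [show (u + m) / 2 - (m - u) / 2 = u by ring, show -((u + m) / 2) - (m - u) / 2 = -m by ring,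
      hFm]
  · rw [abs_lt]
    constructor <;> linarith
  · dsimp only
    linarith
  rintro ⟨t, c⟩ ⟨h₁, h₂, h₃, -⟩
  dsimp only at h₁ h₂ h₃
  obtain ⟨hc₁, hc₂⟩ := abs_lt.1 h₃
  have hw : t + c = mirror F (t - c) :=
    hF.eq_mirror (by linarith) (by linarith) (by rw [neg_add']; exact h₂.symm)
  have hgap : t - c = u := by
    refine (hF.strictMonoOn_boundaryPotential hγ).injOn (mem_Ici.2 (by linarith)) hu.le ?_
    rw [hHu]
    unfold boundaryPotential
    rw [← hw]
    linarith
  rw [hgap] at hw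
  ext <;> dsimp only <;> linarith

end IsValley

section ExpSum

variable {ι κ : Type*} [Fintype ι] [Fintype κ]

noncomputable def expSum (a α : ι → ℝ) (b β : κ → ℝ) (s : ℝ) : ℝ :=
  ∑ k, α k * exp (a k * s) + ∑ l, β l * exp (-b l * s)

theorem expSum_neg (a α : ι → ℝ) (b β : κ → ℝ) (s : ℝ) :
    expSum a α b β (-s) = expSum b β a α s := by
  simp only [expSum, mul_neg, neg_mul, neg_neg]
  ring

theorem continuous_expSum (a α : ι → ℝ) (b β : κ → ℝ) : Continuous (expSum a α b β) := by
  unfold expSum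
  fun_prop

theorem hasDerivAt_expSum (a α : ι → ℝ) (b β : κ → ℝ) (s : ℝ) :
    HasDerivAt (expSum a α b β)
      (∑ k, a k * α k * exp (a k * s) - ∑ l, b l * β l * exp (-b l * s)) s := by
  have h₁ := HasDerivAt.fun_sum (u := univ) fun k _ =>
    (((hasDerivAt_id s).const_mul (a k)).exp).const_mul (α k)
  have h₂ := HasDerivAt.fun_sum (u := univ) fun l _ =>
    (((hasDerivAt_id s).const_mul (-b l)).exp).const_mul (β l)
  refine (h₁.add h₂).congr_deriv ?_
  simp only [id, mul_one, sub_eq_add_neg, ← sum_neg_distrib]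
  congr 1 <;> exact sum_congr rfl fun _ _ => by ring

theorem sum_mul_exp_sub_pos [Nonempty ι] {a α : ι → ℝ} {b β : κ → ℝ}
    (ha : ∀ k, 0 < a k) (hα : ∀ k, 0 < α k) (hb : ∀ l, 0 ≤ b l) (hβ : ∀ l, 0 ≤ β l)
    (hneu : ∑ k, a k * α k = ∑ l, b l * β l) {s : ℝ} (hs : 0 < s) :
    0 < ∑ k, a k * α k * exp (a k * s) - ∑ l, b l * β l * exp (-b l * s) := by
  have h₁ : ∑ k, a k * α k < ∑ k, a k * α k * exp (a k * s) :=
    sum_lt_sum_of_nonempty univ_nonempty fun k _ =>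
      lt_mul_of_one_lt_right (mul_pos (ha k) (hα k)) (one_lt_exp_iff.2 (mul_pos (ha k) hs))
  have h₂ : ∑ l, b l * β l * exp (-b l * s) ≤ ∑ l, b l * β l :=
    sum_le_sum fun l _ => mul_le_of_le_one_right (mul_nonneg (hb l) (hβ l))
      (exp_le_one_iff.2 (mul_nonpos_of_nonpos_of_nonneg (neg_nonpos.2 (hb l)) hs.le))
  linarith

theorem strictMonoOn_expSum [Nonempty ι] {a α : ι → ℝ} {b β : κ → ℝ}
    (ha : ∀ k, 0 < a k) (hα : ∀ k, 0 < α k) (hb : ∀ l, 0 ≤ b l) (hβ : ∀ l, 0 ≤ β l)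
    (hneu : ∑ k, a k * α k = ∑ l, b l * β l) :
    StrictMonoOn (expSum a α b β) (Ici 0) :=
  strictMonoOn_of_deriv_pos (convex_Ici 0) (continuous_expSum a α b β).continuousOn
    fun s hs => by
      rw [interior_Ici] at hs
      rw [(hasDerivAt_expSum a α b β s).deriv]
      exact sum_mul_exp_sub_pos ha hα hb hβ hneu hs

theorem tendsto_expSum_atTop [Nonempty ι] {a α : ι → ℝ} {b β : κ → ℝ}
    (ha : ∀ k, 0 < a k) (hα : ∀ k, 0 < α k) (hβ : ∀ l, 0 ≤ β l) :
    Tendsto (expSum a α b β) atTop atTop := by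
  obtain ⟨k⟩ := ‹Nonempty ι›
  refine tendsto_atTop_mono (fun s => ?_) <|
    (tendsto_exp_atTop.comp (tendsto_id.const_mul_atTop (ha k))).const_mul_atTop (hα k)
  have hk : α k * exp (a k * s) ≤ ∑ j, α j * exp (a j * s) :=
    single_le_sum (f := fun j => α j * exp (a j * s))
      (fun j _ => (mul_pos (hα j) (exp_pos _)).le) (mem_univ k)
  have hβ_sum : 0 ≤ ∑ l, β l * exp (-b l * s) :=
    sum_nonneg fun l _ => mul_nonneg (hβ l) (exp_pos _).le
  simp only [comp_apply, id, expSum]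
  linarith

theorem isValley_expSum [Nonempty ι] [Nonempty κ] {a α : ι → ℝ} {b β : κ → ℝ}
    (ha : ∀ k, 0 < a k) (hα : ∀ k, 0 < α k) (hb : ∀ l, 0 < b l) (hβ : ∀ l, 0 < β l)
    (hneu : ∑ k, a k * α k = ∑ l, b l * β l) :
    IsValley (expSum a α b β) where
  continuous := continuous_expSum a α b β
  strictMonoOn := strictMonoOn_expSum ha hα (fun l => (hb l).le) (fun l => (hβ l).le) hneu
  strictAntiOn x hx y hy hxy := by
    rw [← expSum_neg b β a α x, ← expSum_neg b β a α y]
    exact strictMonoOn_expSum hb hβ (fun k => (ha k).le) (fun k => (hα k).le) hneu.symm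
      (mem_Ici.2 (neg_nonneg.2 hy)) (mem_Ici.2 (neg_nonneg.2 hx))
      (neg_lt_neg hxy)
  tendsto_atTop := tendsto_expSum_atTop ha hα fun l => (hβ l).le
  tendsto_atBot := by
    simpa only [comp_def, expSum_neg] using
      (tendsto_expSum_atTop (b := a) hb hβ fun k => (hα k).le).comp tendsto_neg_atBot_atTop

end ExpSum

theorem stmt_5_general (N1 N2 : ℕ) (hN1 : 0 < N1)
    (a α : Fin N1 → ℝ) (b β : Fin N2 → ℝ)
    (ha : ∀ k, 0 < a k) (hα : ∀ k, 0 < α k)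
    (hb : ∀ l, 0 < b l) (hβ : ∀ l, 0 < β l)
    (hneu : ∑ k, a k * α k = ∑ l, b l * β l)
    (f : ℝ → ℝ)
    (hf : ∀ s, f s = ∑ k, α k * Real.exp (a k * s) + ∑ l, β l * Real.exp (-(b l) * s))
    (φ₀ γ : ℝ) (hφ₀ : 0 < φ₀) (hγ : 0 ≤ γ) :
    ∃! p : ℝ × ℝ,
      φ₀ - p.1 = γ * Real.sqrt (f (p.1 - p.2) - f 0) ∧
      f (p.1 - p.2) = f (-p.1 - p.2) ∧
      |p.2| < p.1 ∧ p.1 ≤ φ₀ := by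
  have : Nonempty (Fin N1) := ⟨⟨0, hN1⟩⟩
  have : Nonempty (Fin N2) := by
    have hpos : ∑ l, b l * β l ≠ 0 :=
      hneu ▸ (sum_pos (fun k _ => mul_pos (ha k) (hα k)) univ_nonempty).ne'
    obtain ⟨l, -, -⟩ := exists_ne_zero_of_sum_ne_zero hpos
    exact ⟨l⟩
  obtain rfl : f = expSum a α b β := funext hf
  exact (isValley_expSum ha hα hb hβ hneu).existsUnique_pair hφ₀ hγ

/-- Lemma 2.7(ii): existence and uniqueness of the pair (t, c) solving
(1.19.1)-(1.19.3). -/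
theorem stmt_5 (N1 N2 : ℕ) (hN1 : 0 < N1) (hN2 : 0 < N2)
    (a α : Fin N1 → ℝ) (b β : Fin N2 → ℝ)
    (ha : ∀ k, 0 < a k) (hα : ∀ k, 0 < α k)
    (hb : ∀ l, 0 < b l) (hβ : ∀ l, 0 < β l)
    (hneu : ∑ k, a k * α k = ∑ l, b l * β l)
    (f : ℝ → ℝ)
    (hf : ∀ s, f s = ∑ k, α k * Real.exp (a k * s) + ∑ l, β l * Real.exp (-(b l) * s))
    (φ₀ γ : ℝ) (hφ₀ : 0 < φ₀) (hγ : 0 ≤ γ) :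
    ∃! p : ℝ × ℝ,
      φ₀ - p.1 = γ * Real.sqrt (f (p.1 - p.2) - f 0) ∧
      f (p.1 - p.2) = f (-p.1 - p.2) ∧
      |p.2| < p.1 ∧ p.1 ≤ φ₀ :=
  stmt_5_general N1 N2 hN1 a α b β ha hα hb hβ hneu f hf φ₀ γ hφ₀ hγ
end

section
/- Assume global electroneutrality and φ₀⁺ > 0. If (t₁, c₁) and (t₂, c₂) both satisfy the system φ₀⁺ - t = γ(f(t-c)-f(0))^{1/2}, f(t-c) = f(-t-c), and |c| < t ≤ φ₀⁺, then t₁ = t₂. -/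
open Finset in
lemma exp_sum_strict (N1 N2 : ℕ) (hN1 : 0 < N1)
    (a α : Fin N1 → ℝ) (b β : Fin N2 → ℝ)
    (ha : ∀ k, 0 < a k) (hα : ∀ k, 0 < α k)
    (hb : ∀ l, 0 < b l) (hβ : ∀ l, 0 < β l)
    (f : ℝ → ℝ)
    (hf : ∀ s, f s = ∑ k, α k * Real.exp (a k * s) + ∑ l, β l * Real.exp (-(b l) * s)) :
    StrictConvexOn ℝ Set.univ f := by
  constructor
  · exact convex_univ
  intro x _ y _ hxy p q hp hq hpq
  simp only [smul_eq_mul]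
  have key : ∀ c : ℝ, c ≠ 0 →
      Real.exp (c * (p * x + q * y)) < p * Real.exp (c * x) + q * Real.exp (c * y) := by
    intro c hc
    have hne : c * x ≠ c * y := fun h => hxy (mul_left_cancel₀ hc h)
    have := strictConvexOn_exp.2 (Set.mem_univ (c * x)) (Set.mem_univ (c * y)) hne hp hq hpq
    simp only [smul_eq_mul] at this
    have hrw : c * (p * x + q * y) = p * (c * x) + q * (c * y) := by ring
    rw [hrw]; exact this
  have h1 : ∑ k, α k * Real.exp (a k * (p * x + q * y))
      < ∑ k, α k * (p * Real.exp (a k * x) + q * Real.exp (a k * y)) := by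
    apply Finset.sum_lt_sum_of_nonempty
    · have : Nonempty (Fin N1) := ⟨⟨0, hN1⟩⟩
      exact Finset.univ_nonempty
    · intro k _
      exact mul_lt_mul_of_pos_left (key _ (ha k).ne') (hα k)
  have h2 : ∑ l, β l * Real.exp (-(b l) * (p * x + q * y))
      ≤ ∑ l, β l * (p * Real.exp (-(b l) * x) + q * Real.exp (-(b l) * y)) := by
    apply Finset.sum_le_sum
    intro l _
    exact le_of_lt (mul_lt_mul_of_pos_left (key _ (neg_ne_zero.mpr (hb l).ne')) (hβ l))
  calc f (p * x + q * y)
      = ∑ k, α k * Real.exp (a k * (p * x + q * y))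
        + ∑ l, β l * Real.exp (-(b l) * (p * x + q * y)) := hf _
    _ < ∑ k, α k * (p * Real.exp (a k * x) + q * Real.exp (a k * y))
        + ∑ l, β l * (p * Real.exp (-(b l) * x) + q * Real.exp (-(b l) * y)) :=
        add_lt_add_of_lt_of_le h1 h2
    _ = p * f x + q * f y := by
        rw [hf x, hf y]
        have A1 : ∑ k, α k * (p * Real.exp (a k * x)) = p * ∑ k, α k * Real.exp (a k * x) := by
          rw [Finset.mul_sum]; exact Finset.sum_congr rfl fun k _ => by ring
        have A2 : ∑ k, α k * (q * Real.exp (a k * y)) = q * ∑ k, α k * Real.exp (a k * y) := by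
          rw [Finset.mul_sum]; exact Finset.sum_congr rfl fun k _ => by ring
        have B1 : ∑ l, β l * (p * Real.exp (-(b l) * x)) = p * ∑ l, β l * Real.exp (-(b l) * x) := by
          rw [Finset.mul_sum]; exact Finset.sum_congr rfl fun l _ => by ring
        have B2 : ∑ l, β l * (q * Real.exp (-(b l) * y)) = q * ∑ l, β l * Real.exp (-(b l) * y) := by
          rw [Finset.mul_sum]; exact Finset.sum_congr rfl fun l _ => by ring
        simp only [mul_add, Finset.sum_add_distrib, A1, A2, B1, B2]
        ring

lemma four_points (f : ℝ → ℝ)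
    (hmax : ∀ x y z : ℝ, y < x → x < z → f x < max (f y) (f z))
    {p q r s : ℝ} (hpq : p < q) (hrs : r < s)
    (hfp : f p = f q) (hfr : f r = f s)
    (hle : f q ≤ f s) (hw : s - r < q - p) : False := by
  rcases lt_or_ge p r with hA | hB
  · rcases lt_or_ge r q with h1 | h1
    · have h2 := hmax r p q hA h1
      rw [hfp, max_self, hfr] at h2
      exact absurd h2 (not_lt.mpr hle)
    · rcases eq_or_lt_of_le h1 with he | h1'
      · have h2 := hmax q p s hpq (he ▸ hrs)
        rw [hfp] at h2
        have h3 : f s = f q := by rw [← hfr, ← he]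
        rw [h3, max_self] at h2
        exact lt_irrefl _ h2
      · have h2 := hmax r q s h1' hrs
        rw [hfr] at h2
        rcases max_cases (f q) (f s) with ⟨hm, _⟩ | ⟨hm, _⟩ <;> rw [hm] at h2
        · linarith
        · exact lt_irrefl _ h2
  · have hsq : s < q := by linarith
    rcases lt_or_ge p s with h1 | h1
    · have h2 := hmax s p q h1 hsq
      rw [hfp, max_self] at h2
      linarith
    · rcases eq_or_lt_of_le h1 with he | h1'
      · have h2 := hmax p r q (he ▸ hrs) hpq
        rw [hfr] at h2
        have h3 : f p = f s := by rw [← he]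
        rw [h3, max_eq_left hle] at h2
        exact lt_irrefl _ h2
      · have h2 := hmax s r p hrs h1'
        rw [hfr, hfp] at h2
        rcases max_cases (f s) (f q) with ⟨hm, _⟩ | ⟨hm, _⟩ <;> rw [hm] at h2
        · exact lt_irrefl _ h2
        · linarith

lemma width_mono (f : ℝ → ℝ)
    (hmax : ∀ x y z : ℝ, y < x → x < z → f x < max (f y) (f z))
    {t₁ c₁ t₂ c₂ : ℝ}
    (h₁b : f (t₁ - c₁) = f (-t₁ - c₁)) (h₁c : |c₁| < t₁)
    (h₂b : f (t₂ - c₂) = f (-t₂ - c₂)) (h₂c : |c₂| < t₂)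
    (ht : t₁ < t₂) : f (t₁ - c₁) < f (t₂ - c₂) := by
  by_contra hcon
  push_neg at hcon
  have ht₁ : 0 < t₁ := lt_of_le_of_lt (abs_nonneg c₁) h₁c
  have ht₂ : 0 < t₂ := lt_of_le_of_lt (abs_nonneg c₂) h₂c
  exact four_points f hmax (p := -t₂ - c₂) (q := t₂ - c₂) (r := -t₁ - c₁) (s := t₁ - c₁)
    (by linarith) (by linarith) h₂b.symm h₁b.symm hcon (by linarith)



/-- Uniqueness of the t-component of solutions of the system (1.19.1)-(1.19.3). -/
theorem stmt_6 (N1 N2 : ℕ) (hN1 : 0 < N1) (hN2 : 0 < N2)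
    (a α : Fin N1 → ℝ) (b β : Fin N2 → ℝ)
    (ha : ∀ k, 0 < a k) (hα : ∀ k, 0 < α k)
    (hb : ∀ l, 0 < b l) (hβ : ∀ l, 0 < β l)
    (hneu : ∑ k, a k * α k = ∑ l, b l * β l)
    (f : ℝ → ℝ)
    (hf : ∀ s, f s = ∑ k, α k * Real.exp (a k * s) + ∑ l, β l * Real.exp (-(b l) * s))
    (φ₀ γ : ℝ) (hφ₀ : 0 < φ₀) (hγ : 0 ≤ γ)
    (t₁ c₁ t₂ c₂ : ℝ)
    (h₁a : φ₀ - t₁ = γ * Real.sqrt (f (t₁ - c₁) - f 0))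
    (h₁b : f (t₁ - c₁) = f (-t₁ - c₁))
    (h₁c : |c₁| < t₁) (h₁d : t₁ ≤ φ₀)
    (h₂a : φ₀ - t₂ = γ * Real.sqrt (f (t₂ - c₂) - f 0))
    (h₂b : f (t₂ - c₂) = f (-t₂ - c₂))
    (h₂c : |c₂| < t₂) (h₂d : t₂ ≤ φ₀) :
    t₁ = t₂ := by
  have hconv := exp_sum_strict N1 N2 hN1 a α b β ha hα hb hβ f hf
  have hmax : ∀ x y z : ℝ, y < x → x < z → f x < max (f y) (f z) := by
    intro x y z h1 h2
    exact hconv.lt_on_openSegment (Set.mem_univ y) (Set.mem_univ z)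
      (ne_of_lt (h1.trans h2))
      (by rw [openSegment_eq_Ioo (h1.trans h2)]; exact ⟨h1, h2⟩)
  by_contra hne
  rcases lt_trichotomy t₁ t₂ with h | h | h
  · have hw := width_mono f hmax h₁b h₁c h₂b h₂c h
    have hs : Real.sqrt (f (t₁ - c₁) - f 0) ≤ Real.sqrt (f (t₂ - c₂) - f 0) :=
      Real.sqrt_le_sqrt (by linarith)
    have := mul_le_mul_of_nonneg_left hs hγ
    linarith
  · exact hne h
  · have hw := width_mono f hmax h₂b h₂c h₁b h₁c h
    have hs : Real.sqrt (f (t₂ - c₂) - f 0) ≤ Real.sqrt (f (t₁ - c₁) - f 0) :=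
      Real.sqrt_le_sqrt (by linarith)
    have := mul_le_mul_of_nonneg_left hs hγ
    linarith
end

section
/- Assume global electroneutrality and φ₀⁺ > 0. For γ = 0, the unique pair (t, c) satisfying φ₀⁺ - t = γ(f(t-c)-f(0))^{1/2}, f(t-c) = f(-t-c), |c| < t ≤ φ₀⁺ is given by t = φ₀⁺ and c = c* where c* is the unique real with |c*| < φ₀⁺ satisfying f(φ₀⁺ - c*) = f(-φ₀⁺ - c*). -/
/-- For γ = 0, the unique solution of the system is (t, c) = (φ₀⁺, c*), where c* is the
unique real with |c*| < φ₀⁺ and f(φ₀⁺ - c*) = f(-φ₀⁺ - c*). -/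
theorem stmt_7 (N1 N2 : ℕ) (hN1 : 0 < N1) (hN2 : 0 < N2)
    (a α : Fin N1 → ℝ) (b β : Fin N2 → ℝ)
    (ha : ∀ k, 0 < a k) (hα : ∀ k, 0 < α k)
    (hb : ∀ l, 0 < b l) (hβ : ∀ l, 0 < β l)
    (hneu : ∑ k, a k * α k = ∑ l, b l * β l)
    (f : ℝ → ℝ)
    (hf : ∀ s, f s = ∑ k, α k * Real.exp (a k * s) + ∑ l, β l * Real.exp (-(b l) * s))
    (φ₀ : ℝ) (hφ₀ : 0 < φ₀) :
    (∃! cs : ℝ, |cs| < φ₀ ∧ f (φ₀ - cs) = f (-φ₀ - cs)) ∧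
    ∀ cs : ℝ, |cs| < φ₀ → f (φ₀ - cs) = f (-φ₀ - cs) →
      ∀ t c : ℝ,
        φ₀ - t = 0 * Real.sqrt (f (t - c) - f 0) →
        f (t - c) = f (-t - c) → |c| < t → t ≤ φ₀ →
        t = φ₀ ∧ c = cs := by
  haveI : Nonempty (Fin N1) := Fin.pos_iff_nonempty.mp hN1
  haveI : Nonempty (Fin N2) := Fin.pos_iff_nonempty.mp hN2
  -- f has a strict global minimum at 0
  have hmin : ∀ s : ℝ, s ≠ 0 → f 0 < f s := by
    intro s hs
    have h1 : ∑ k, α k * (a k * s) < ∑ k, α k * (Real.exp (a k * s) - 1) := by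
      apply Finset.sum_lt_sum_of_nonempty Finset.univ_nonempty
      intro k _
      have hx : a k * s ≠ 0 := mul_ne_zero (ne_of_gt (ha k)) hs
      have := Real.add_one_lt_exp hx
      nlinarith [hα k]
    have h2 : ∑ l, β l * (-(b l) * s) < ∑ l, β l * (Real.exp (-(b l) * s) - 1) := by
      apply Finset.sum_lt_sum_of_nonempty Finset.univ_nonempty
      intro l _
      have hx : -(b l) * s ≠ 0 := mul_ne_zero (neg_ne_zero.mpr (ne_of_gt (hb l))) hs
      have := Real.add_one_lt_exp hx
      nlinarith [hβ l]
    have e1 : ∑ k, α k * (a k * s) = (∑ k, a k * α k) * s := by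
      rw [Finset.sum_mul]; exact Finset.sum_congr rfl (fun k _ => by ring)
    have e2 : ∑ l, β l * (-(b l) * s) = (∑ l, b l * β l) * (-s) := by
      rw [Finset.sum_mul]
      exact Finset.sum_congr rfl (fun l _ => by ring)
    have e3 : ∑ k, α k * (Real.exp (a k * s) - 1)
        = (∑ k, α k * Real.exp (a k * s)) - ∑ k, α k := by
      rw [← Finset.sum_sub_distrib]
      exact Finset.sum_congr rfl (fun k _ => by ring)
    have e4 : ∑ l, β l * (Real.exp (-(b l) * s) - 1)
        = (∑ l, β l * Real.exp (-(b l) * s)) - ∑ l, β l := by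
      rw [← Finset.sum_sub_distrib]
      exact Finset.sum_congr rfl (fun l _ => by ring)
    rw [hf s, hf 0]
    simp only [mul_zero, Real.exp_zero, mul_one]
    rw [e1, e3] at h1
    rw [e2, e4] at h2
    have hs' : (∑ k, a k * α k) * s = (∑ l, b l * β l) * s := by rw [hneu]
    linarith
  set g : ℝ → ℝ := fun c => f (φ₀ - c) - f (-φ₀ - c) with hg
  have factor1 : ∀ (x y c : ℝ),
      Real.exp (x * (y - c)) - Real.exp (x * (-y - c))
        = (Real.exp (x * y) - Real.exp (-(x * y))) * Real.exp (-(x * c)) := by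
    intro x y c
    rw [sub_mul, ← Real.exp_add, ← Real.exp_add]
    ring_nf
  have hgexp : ∀ c, g c =
      (∑ k, α k * ((Real.exp (a k * φ₀) - Real.exp (-(a k * φ₀))) * Real.exp (-(a k * c))))
      + ∑ l, β l * ((Real.exp (-b l * φ₀) - Real.exp (-(-b l * φ₀))) * Real.exp (-(-b l * c))) := by
    intro c
    simp only [hg, hf]
    simp only [← factor1, mul_sub, Finset.sum_sub_distrib]
    ring
  have hanti : StrictAnti g := by
    intro c1 c2 hlt
    rw [hgexp c1, hgexp c2]
    apply add_lt_add
    · apply Finset.sum_lt_sum_of_nonempty Finset.univ_nonempty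
      intro k _
      have hcoef : 0 < Real.exp (a k * φ₀) - Real.exp (-(a k * φ₀)) := by
        have : -(a k * φ₀) < a k * φ₀ := by nlinarith [ha k]
        linarith [Real.exp_lt_exp.mpr this]
      have hexp : Real.exp (-(a k * c2)) < Real.exp (-(a k * c1)) := by
        apply Real.exp_lt_exp.mpr
        nlinarith [ha k]
      exact mul_lt_mul_of_pos_left (mul_lt_mul_of_pos_left hexp hcoef) (hα k)
    · apply Finset.sum_lt_sum_of_nonempty Finset.univ_nonempty
      intro l _
      have hcoef : Real.exp (-b l * φ₀) - Real.exp (-(-b l * φ₀)) < 0 := by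
        have : -b l * φ₀ < -(-b l * φ₀) := by nlinarith [hb l]
        linarith [Real.exp_lt_exp.mpr this]
      have hexp : Real.exp (-(-b l * c1)) < Real.exp (-(-b l * c2)) := by
        apply Real.exp_lt_exp.mpr
        nlinarith [hb l]
      exact mul_lt_mul_of_pos_left (mul_lt_mul_of_neg_left hexp hcoef) (hβ l)
  have hcontf : Continuous f := by
    have hfe : f = fun s => ∑ k, α k * Real.exp (a k * s) + ∑ l, β l * Real.exp (-(b l) * s) :=
      funext hf
    rw [hfe]
    apply Continuous.add <;> apply continuous_finset_sum <;> intro i _ <;> fun_prop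
  have hcontg : Continuous g := by
    simp only [hg]
    fun_prop
  have hgneg : 0 < g (-φ₀) := by
    have h0 : -φ₀ - -φ₀ = (0 : ℝ) := by ring
    have hne : φ₀ - -φ₀ ≠ 0 := by intro h; nlinarith
    simp only [hg]
    rw [h0]
    linarith [hmin _ hne]
  have hgpos : g φ₀ < 0 := by
    have h0 : φ₀ - φ₀ = (0 : ℝ) := by ring
    have hne : -φ₀ - φ₀ ≠ 0 := by intro h; nlinarith
    simp only [hg]
    rw [h0]
    linarith [hmin _ hne]
  have hle : (-φ₀ : ℝ) ≤ φ₀ := by linarith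
  have hsub := intermediate_value_Icc' hle hcontg.continuousOn
  have h0mem : (0 : ℝ) ∈ Set.Icc (g φ₀) (g (-φ₀)) := ⟨le_of_lt hgpos, le_of_lt hgneg⟩
  obtain ⟨c0, hc0mem, hc0⟩ := hsub h0mem
  have habs : |c0| < φ₀ := by
    rw [abs_lt]
    constructor
    · rcases lt_or_eq_of_le hc0mem.1 with h | h
      · exact h
      · exfalso; rw [h, hc0] at hgneg; exact lt_irrefl _ hgneg
    · rcases lt_or_eq_of_le hc0mem.2 with h | h
      · exact h
      · exfalso; rw [h] at hc0; rw [hc0] at hgpos; exact lt_irrefl _ hgpos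
  have hgc0 : f (φ₀ - c0) = f (-φ₀ - c0) := by
    have : g c0 = 0 := hc0
    simp only [hg] at this
    linarith
  constructor
  · refine ⟨c0, ⟨habs, hgc0⟩, ?_⟩
    intro y ⟨_, hy2⟩
    apply hanti.injective
    simp only [hg]
    rw [hy2, hgc0]
    ring
  · intro cs hcs1 hcs2 t c ht hfc _ _
    have ht' : t = φ₀ := by
      rw [zero_mul] at ht
      linarith
    subst ht'
    refine ⟨rfl, ?_⟩
    apply hanti.injective
    simp only [hg]
    rw [hfc, hcs2]
    ring
end

section
/- Assume global electroneutrality, φ₀⁺ > 0, and let t(γ), c(γ) denote the unique solution of the system φ₀⁺ - t = γ(f(t-c)-f(0))^{1/2}, f(t-c) = f(-t-c), |c| < t ≤ φ₀⁺ for γ > 0. Then lim_{γ→∞} t(γ) = 0 and lim_{γ→∞} c(γ) = 0. -/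
lemma quad_exp {x : ℝ} (hx : 0 ≤ x) : 1 + x + x^2/4 ≤ Real.exp x := by
  have h := Real.add_one_le_exp (x/2)
  have hexp : Real.exp (x/2) * Real.exp (x/2) = Real.exp x := by
    rw [← Real.exp_add]; ring_nf
  nlinarith [h, hexp, hx]

set_option maxHeartbeats 1600000 in
/-- As γ → ∞, the solutions t(γ) and c(γ) of the system (1.19.1)-(1.19.3)
both tend to 0. -/
theorem stmt_8 (N1 N2 : ℕ) (hN1 : 0 < N1) (hN2 : 0 < N2)
    (a α : Fin N1 → ℝ) (b β : Fin N2 → ℝ)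
    (ha : ∀ k, 0 < a k) (hα : ∀ k, 0 < α k)
    (hb : ∀ l, 0 < b l) (hβ : ∀ l, 0 < β l)
    (hneu : ∑ k, a k * α k = ∑ l, b l * β l)
    (f : ℝ → ℝ)
    (hf : ∀ s, f s = ∑ k, α k * Real.exp (a k * s) + ∑ l, β l * Real.exp (-(b l) * s))
    (φ₀ : ℝ) (hφ₀ : 0 < φ₀)
    (t c : ℝ → ℝ)
    (hsol : ∀ γ : ℝ, 0 < γ →
      φ₀ - t γ = γ * Real.sqrt (f (t γ - c γ) - f 0) ∧
      f (t γ - c γ) = f (-t γ - c γ) ∧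
      |c γ| < t γ ∧ t γ ≤ φ₀) :
    Filter.Tendsto t Filter.atTop (nhds 0) ∧
    Filter.Tendsto c Filter.atTop (nhds 0) := by
  classical
  set k0 : Fin N1 := ⟨0, hN1⟩ with hk0
  set l0 : Fin N2 := ⟨0, hN2⟩ with hl0
  set m : ℝ := min (α k0 * (a k0)^2) (β l0 * (b l0)^2) with hm_def
  have hm : 0 < m := lt_min (mul_pos (hα k0) (pow_pos (ha k0) 2)) (mul_pos (hβ l0) (pow_pos (hb l0) 2))
  have hf0 : f 0 = ∑ k, α k + ∑ l, β l := by
    rw [hf]; simp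
  -- key coercivity estimate: f s - f 0 ≥ (m/4) s²
  have key : ∀ s : ℝ, m/4 * s^2 ≤ f s - f 0 := by
    intro s
    rw [hf s, hf0]
    rcases le_or_gt 0 s with hs | hs
    · -- s ≥ 0: extra quadratic from the α side
      have S1 : ∑ k, (α k * (1 + a k * s) + (if k = k0 then α k0 * (a k0 * s)^2/4 else 0))
          ≤ ∑ k, α k * Real.exp (a k * s) := by
        apply Finset.sum_le_sum
        intro k _
        by_cases hk : k = k0
        · rw [if_pos hk, hk]
          have h := quad_exp (x := a k0 * s) (mul_nonneg (ha k0).le hs)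
          nlinarith [(hα k0).le, h]
        · simp only [if_neg hk, add_zero]
          have h := Real.add_one_le_exp (a k * s)
          nlinarith [(hα k).le, h]
      have S2 : ∑ l, β l * (1 + (-(b l) * s)) ≤ ∑ l, β l * Real.exp (-(b l) * s) := by
        apply Finset.sum_le_sum
        intro l _
        have h := Real.add_one_le_exp (-(b l) * s)
        nlinarith [(hβ l).le, h]
      have e1 : ∑ k, (α k * (1 + a k * s) + (if k = k0 then α k0 * (a k0 * s)^2/4 else 0))
          = (∑ k, α k) + (∑ k, a k * α k) * s + α k0 * (a k0 * s)^2/4 := by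
        rw [Finset.sum_add_distrib, Finset.sum_ite_eq' Finset.univ k0
          (fun _ => α k0 * (a k0 * s)^2/4)]
        simp only [Finset.mem_univ, if_pos]
        rw [Finset.sum_mul, ← Finset.sum_add_distrib]
        rw [show (∑ k, (α k + a k * α k * s)) = ∑ k, α k * (1 + a k * s) from
          Finset.sum_congr rfl (fun k _ => by ring)]
      have e2 : ∑ l, β l * (1 + (-(b l) * s)) = (∑ l, β l) - (∑ l, b l * β l) * s := by
        rw [Finset.sum_mul, ← Finset.sum_sub_distrib]
        exact Finset.sum_congr rfl (fun l _ => by ring)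
      have hmle : m ≤ α k0 * (a k0)^2 := min_le_left _ _
      have hsq : (0:ℝ) ≤ s^2 := sq_nonneg s
      rw [e1] at S1
      rw [e2] at S2
      nlinarith [S1, S2, hneu, mul_le_mul_of_nonneg_right hmle hsq]
    · -- s < 0: extra quadratic from the β side
      have S1 : ∑ k, α k * (1 + a k * s) ≤ ∑ k, α k * Real.exp (a k * s) := by
        apply Finset.sum_le_sum
        intro k _
        have h := Real.add_one_le_exp (a k * s)
        nlinarith [(hα k).le, h]
      have S2 : ∑ l, (β l * (1 + (-(b l) * s)) + (if l = l0 then β l0 * (b l0 * s)^2/4 else 0))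
          ≤ ∑ l, β l * Real.exp (-(b l) * s) := by
        apply Finset.sum_le_sum
        intro l _
        by_cases hl : l = l0
        · rw [if_pos hl, hl]
          have hx : 0 ≤ -(b l0) * s := by nlinarith [hb l0]
          have h := quad_exp (x := -(b l0) * s) hx
          nlinarith [(hβ l0).le, h]
        · simp only [if_neg hl, add_zero]
          have h := Real.add_one_le_exp (-(b l) * s)
          nlinarith [(hβ l).le, h]
      have e1 : ∑ k, α k * (1 + a k * s) = (∑ k, α k) + (∑ k, a k * α k) * s := by
        rw [Finset.sum_mul, ← Finset.sum_add_distrib]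
        exact Finset.sum_congr rfl (fun k _ => by ring)
      have e2 : ∑ l, (β l * (1 + (-(b l) * s)) + (if l = l0 then β l0 * (b l0 * s)^2/4 else 0))
          = (∑ l, β l) - (∑ l, b l * β l) * s + β l0 * (b l0 * s)^2/4 := by
        rw [Finset.sum_add_distrib, Finset.sum_ite_eq' Finset.univ l0
          (fun _ => β l0 * (b l0 * s)^2/4)]
        simp only [Finset.mem_univ, if_pos]
        rw [Finset.sum_mul, ← Finset.sum_sub_distrib]
        rw [show (∑ l, (β l - b l * β l * s)) = ∑ l, β l * (1 + (-(b l) * s)) from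
          Finset.sum_congr rfl (fun l _ => by ring)]
      have hmle : m ≤ β l0 * (b l0)^2 := min_le_right _ _
      have hsq : (0:ℝ) ≤ s^2 := sq_nonneg s
      rw [e1] at S1
      rw [e2] at S2
      nlinarith [S1, S2, hneu, mul_le_mul_of_nonneg_right hmle hsq]
  -- quantitative bound on t γ
  set sm : ℝ := Real.sqrt m with hsm_def
  have hsm_pos : 0 < sm := Real.sqrt_pos.mpr hm
  have hsm_sq : sm^2 = m := Real.sq_sqrt hm.le
  set C : ℝ := 2 * φ₀ / sm with hC_def
  have main : ∀ γ : ℝ, 0 < γ → 0 < t γ ∧ t γ ≤ C / γ := by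
    intro γ hγ
    obtain ⟨h1, h2, h3, h4⟩ := hsol γ hγ
    have ht_pos : 0 < t γ := lt_of_le_of_lt (abs_nonneg _) h3
    set D : ℝ := f (t γ - c γ) - f 0 with hD_def
    have hD1 : m/4 * (t γ - c γ)^2 ≤ D := key _
    have hD2 : m/4 * (t γ + c γ)^2 ≤ D := by
      have := key (-t γ - c γ)
      rw [← h2] at this
      nlinarith [this]
    have hDt : m/4 * (t γ)^2 ≤ D := by nlinarith [sq_nonneg (c γ), hm]
    have hD_nonneg : 0 ≤ D := le_trans (by positivity) hDt
    have hsq_eq : (φ₀ - t γ)^2 = γ^2 * D := by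
      rw [h1, mul_pow, Real.sq_sqrt hD_nonneg]
    have hφt_nonneg : 0 ≤ φ₀ - t γ := by
      rw [h1]; positivity
    have hub : (φ₀ - t γ)^2 ≤ φ₀^2 := by nlinarith [ht_pos]
    have hx2 : (sm * γ * t γ)^2 ≤ (2 * φ₀)^2 := by
      have h5 := mul_le_mul_of_nonneg_left hDt (sq_nonneg γ)
      have h6 : (sm * γ * t γ)^2 = m * (γ^2 * t γ^2) := by
        rw [mul_pow, mul_pow, hsm_sq]; ring
      nlinarith [h5, hsq_eq, hub, h6]
    have hkey2 : sm * γ * t γ ≤ 2 * φ₀ := by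
      nlinarith [hx2, hφ₀, mul_nonneg (mul_nonneg hsm_pos.le hγ.le) ht_pos.le]
    refine ⟨ht_pos, ?_⟩
    rw [hC_def, div_div, le_div_iff₀ (mul_pos hsm_pos hγ)]
    nlinarith [hkey2]
  have hCt : Filter.Tendsto (fun γ : ℝ => C / γ) Filter.atTop (nhds 0) :=
    Filter.Tendsto.div_atTop tendsto_const_nhds Filter.tendsto_id
  have ht : Filter.Tendsto t Filter.atTop (nhds 0) := by
    apply tendsto_of_tendsto_of_tendsto_of_le_of_le' tendsto_const_nhds hCt
    · filter_upwards [Filter.eventually_gt_atTop 0] with γ hγ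
      exact (main γ hγ).1.le
    · filter_upwards [Filter.eventually_gt_atTop 0] with γ hγ
      exact (main γ hγ).2
  refine ⟨ht, ?_⟩
  have hnt : Filter.Tendsto (fun γ => -(t γ)) Filter.atTop (nhds 0) := by
    simpa using ht.neg
  apply tendsto_of_tendsto_of_tendsto_of_le_of_le' hnt ht
  · filter_upwards [Filter.eventually_gt_atTop 0] with γ hγ
    have := (hsol γ hγ).2.2.1
    linarith [abs_lt.mp this |>.1]
  · filter_upwards [Filter.eventually_gt_atTop 0] with γ hγ
    have := (hsol γ hγ).2.2.1
    linarith [abs_lt.mp this |>.2]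
end

section
/- Let ε > 0 and let φ : [-1,1] → ℝ be a C² solution of ε² φ'' = Σ_{k=1}^{N1} A_k e^{a_k φ} - Σ_{l=1}^{N2} B_l e^{-b_l φ} on (-1,1), where A_k, B_l > 0 and a_k, b_l > 0. If φ'(y₁) = φ'(y₂) = 0 for some -1 ≤ y₁ < y₂ ≤ 1, then φ' ≡ 0 on [y₁, y₂]. -/
/-!
Multiplying the equation by `φ'` shows that the energy `ε² φ'² / 2 - F ∘ φ` is constant, where
`F t = ∑ (A_k / a_k) e^{a_k t} + ∑ (B_l / b_l) e^{-b_l t}` is a convex primitive of the right-hand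
side. As `φ'(y₁) = 0`, this gives `ε² φ'² / 2 = F ∘ φ - F (φ y₁)`, so `F ∘ φ` takes the value
`F (φ y₁)` wherever `φ'` vanishes, in particular at the extreme points of `φ` on `[y₁, y₂]`
(interior ones by Fermat, endpoints by hypothesis). By convexity `F (φ x)` is at most the larger
of its values at the minimum and the maximum of `φ`, hence `ε² φ'(x)² / 2 ≤ 0`.
-/

open Set Real

noncomputable def expPoly {ι : Type*} [Fintype ι] (c d : ι → ℝ) (t : ℝ) : ℝ :=
  ∑ i, c i * exp (d i * t)

section expPoly

variable {ι : Type*} [Fintype ι]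

theorem hasDerivAt_expPoly (c d : ι → ℝ) (t : ℝ) :
    HasDerivAt (expPoly c d) (expPoly (c * d) d t) t := by
  have hterm (i : ι) : HasDerivAt (fun t => c i * exp (d i * t)) (c i * d i * exp (d i * t)) t := by
    simpa [mul_assoc, mul_comm (d i)] using
      (((hasDerivAt_id t).const_mul (d i)).exp).const_mul (c i)
  exact HasDerivAt.fun_sum (u := Finset.univ) fun i _ => hterm i

theorem convexOn_expPoly {c : ι → ℝ} (hc : ∀ i, 0 ≤ c i) (d : ι → ℝ) :
    ConvexOn ℝ univ (expPoly c d) := by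
  refine convexOn_of_hasDerivWithinAt2_nonneg convex_univ
    (fun t _ => (hasDerivAt_expPoly c d t).continuousAt.continuousWithinAt)
    (fun t _ => (hasDerivAt_expPoly c d t).hasDerivWithinAt)
    (fun t _ => (hasDerivAt_expPoly (c * d) d t).hasDerivWithinAt) fun t _ => ?_
  refine Finset.sum_nonneg fun i _ => mul_nonneg ?_ (exp_pos _).le
  simpa only [Pi.mul_apply, mul_assoc] using mul_nonneg (hc i) (mul_self_nonneg (d i))

end expPoly

section ConservativeODE

variable {F f φ φ' φ'' : ℝ → ℝ} {c y₁ y₂ : ℝ}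

theorem eq_of_continuousOn_Icc_of_hasDerivAt_zero {g : ℝ → ℝ} (hg : ContinuousOn g (Icc y₁ y₂))
    (hg' : ∀ x ∈ Ioo y₁ y₂, HasDerivAt g 0 x) : ∀ x ∈ Icc y₁ y₂, g x = g y₁ := by
  rintro x ⟨hx₁, hx₂⟩
  rcases hx₁.eq_or_lt with rfl | hlt
  · rfl
  obtain ⟨z, _, hz⟩ := exists_hasDerivAt_eq_slope g (fun _ => 0) hlt
    (hg.mono (Icc_subset_Icc_right hx₂))
    (fun z hz => hg' z ⟨hz.1, hz.2.trans_le hx₂⟩)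
  rw [eq_comm, div_eq_zero_iff, sub_eq_zero] at hz
  exact hz.resolve_right (sub_ne_zero.mpr hlt.ne')

theorem eq_zero_of_isExtrOn_Icc (hd₁ : ∀ x ∈ Ioo y₁ y₂, HasDerivAt φ (φ' x) x)
    (h₁ : φ' y₁ = 0) (h₂ : φ' y₂ = 0) {z : ℝ} (hz : z ∈ Icc y₁ y₂)
    (hext : IsExtrOn φ (Icc y₁ y₂) z) : φ' z = 0 := by
  rcases hz.1.eq_or_lt with rfl | hz₁
  · exact h₁
  rcases hz.2.eq_or_lt with rfl | hz₂
  · exact h₂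
  exact (hext.isLocalExtr (Icc_mem_nhds hz₁ hz₂)).hasDerivAt_eq_zero (hd₁ z ⟨hz₁, hz₂⟩)

variable (hF : ∀ t, HasDerivAt F (f t) t)
  (hφ : ContinuousOn φ (Icc y₁ y₂)) (hφ' : ContinuousOn φ' (Icc y₁ y₂))
  (hd₁ : ∀ x ∈ Ioo y₁ y₂, HasDerivAt φ (φ' x) x)
  (hd₂ : ∀ x ∈ Ioo y₁ y₂, HasDerivAt φ' (φ'' x) x)
  (hode : ∀ x ∈ Ioo y₁ y₂, c * φ'' x = f (φ x))
include hF hφ hφ' hd₁ hd₂ hode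

theorem energy_eq_of_ode :
    ∀ x ∈ Icc y₁ y₂, c * φ' x ^ 2 / 2 - F (φ x) = c * φ' y₁ ^ 2 / 2 - F (φ y₁) := by
  refine eq_of_continuousOn_Icc_of_hasDerivAt_zero ?_ fun x hx => ?_
  · exact ((continuousOn_const.mul (hφ'.pow 2)).div_const 2).sub
      ((continuous_iff_continuousAt.mpr fun t => (hF t).continuousAt).comp_continuousOn hφ)
  · refine ((((hd₂ x hx).fun_pow 2).const_mul c).div_const 2 |>.fun_sub
      ((hF (φ x)).comp x (hd₁ x hx))).congr_deriv ?_
    rw [← hode x hx]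
    ring

theorem eq_zero_of_ode_of_convexOn (hc : 0 < c) (hFc : ConvexOn ℝ univ F)
    (h₁ : φ' y₁ = 0) (h₂ : φ' y₂ = 0) : ∀ x ∈ Icc y₁ y₂, φ' x = 0 := by
  intro x hx
  have henergy := energy_eq_of_ode hF hφ hφ' hd₁ hd₂ hode
  have hlevel : ∀ z ∈ Icc y₁ y₂, IsExtrOn φ (Icc y₁ y₂) z → F (φ z) = F (φ y₁) := by
    intro z hz hext
    have := henergy z hz
    rw [eq_zero_of_isExtrOn_Icc hd₁ h₁ h₂ hz hext, h₁] at this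
    linarith
  obtain ⟨zm, hzm, hmin⟩ := isCompact_Icc.exists_isMinOn ⟨x, hx⟩ hφ
  obtain ⟨zM, hzM, hmax⟩ := isCompact_Icc.exists_isMaxOn ⟨x, hx⟩ hφ
  have hFx : F (φ x) ≤ F (φ y₁) :=
    calc F (φ x) ≤ max (F (φ zm)) (F (φ zM)) := by
          refine hFc.le_on_segment (mem_univ _) (mem_univ _) ?_
          rw [segment_eq_Icc ((hmin hx).trans (hmax hx))]
          exact ⟨hmin hx, hmax hx⟩
      _ = F (φ y₁) := by
          rw [hlevel zm hzm hmin.isExtr, hlevel zM hzM hmax.isExtr, max_self]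
  have hsq : φ' x ^ 2 = 0 := by
    have := henergy x hx
    rw [h₁] at this
    nlinarith [sq_nonneg (φ' x)]
  exact pow_eq_zero_iff two_ne_zero |>.mp hsq

end ConservativeODE
theorem stmt_10_general (N1 N2 : ℕ)
    (a A : Fin N1 → ℝ) (b B : Fin N2 → ℝ)
    (ha : ∀ k, 0 < a k) (hA : ∀ k, 0 < A k)
    (hb : ∀ l, 0 < b l) (hB : ∀ l, 0 < B l)
    (ε : ℝ) (hε : 0 < ε)
    (φ φ' φ'' : ℝ → ℝ)
    (hd1 : ∀ x ∈ Set.Icc (-1 : ℝ) 1, HasDerivWithinAt φ (φ' x) (Set.Icc (-1 : ℝ) 1) x)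
    (hd2 : ∀ x ∈ Set.Icc (-1 : ℝ) 1, HasDerivWithinAt φ' (φ'' x) (Set.Icc (-1 : ℝ) 1) x)
    (hode : ∀ x ∈ Set.Ioo (-1 : ℝ) 1,
      ε ^ 2 * φ'' x =
        ∑ k, A k * Real.exp (a k * φ x) - ∑ l, B l * Real.exp (-(b l) * φ x))
    (y₁ y₂ : ℝ) (hy : -1 ≤ y₁) (hy'' : y₂ ≤ 1)
    (hz₁ : φ' y₁ = 0) (hz₂ : φ' y₂ = 0) :
    ∀ x ∈ Set.Icc y₁ y₂, φ' x = 0 := by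
  have hF (t : ℝ) : HasDerivAt (expPoly (A / a) a + expPoly (B / b) (-b))
      (expPoly A a t - expPoly B (-b) t) t := by
    refine ((hasDerivAt_expPoly _ _ t).add (hasDerivAt_expPoly _ _ t)).congr_deriv ?_
    simp only [expPoly, Pi.mul_apply, Pi.div_apply, Pi.neg_apply, sub_eq_add_neg,
      ← Finset.sum_neg_distrib]
    congr 1 <;> refine Finset.sum_congr rfl fun i _ => ?_
    · rw [div_mul_cancel₀ _ (ha i).ne']
    · rw [mul_neg, div_mul_cancel₀ _ (hb i).ne', neg_mul]
  have hFc : ConvexOn ℝ univ (expPoly (A / a) a + expPoly (B / b) (-b)) :=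
    (convexOn_expPoly (fun k => (div_pos (hA k) (ha k)).le) a).add
      (convexOn_expPoly (fun l => (div_pos (hB l) (hb l)).le) (-b))
  have hIcc : Icc y₁ y₂ ⊆ Icc (-1) 1 := Icc_subset_Icc hy hy''
  have hIoo : Ioo y₁ y₂ ⊆ Ioo (-1) 1 := Ioo_subset_Ioo hy hy''
  have hAt {g g' : ℝ → ℝ} (hg : ∀ x ∈ Icc (-1 : ℝ) 1, HasDerivWithinAt g (g' x) (Icc (-1) 1) x)
      (x : ℝ) (hx : x ∈ Ioo y₁ y₂) : HasDerivAt g (g' x) x :=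
    (hg x (Ioo_subset_Icc_self (hIoo hx))).hasDerivAt (Icc_mem_nhds (hIoo hx).1 (hIoo hx).2)
  have hCont {g g' : ℝ → ℝ} (hg : ∀ x ∈ Icc (-1 : ℝ) 1, HasDerivWithinAt g (g' x) (Icc (-1) 1) x) :
      ContinuousOn g (Icc y₁ y₂) :=
    fun x hx => (hg x (hIcc hx)).continuousWithinAt.mono hIcc
  exact eq_zero_of_ode_of_convexOn hF (hCont hd1) (hCont hd2) (hAt hd1) (hAt hd2)
    (fun x hx => hode x (hIoo hx)) (pow_pos hε 2) hFc hz₁ hz₂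

/-- If φ' vanishes at two points y₁ < y₂, then φ' ≡ 0 on [y₁, y₂]. -/
theorem stmt_10 (N1 N2 : ℕ)
    (a A : Fin N1 → ℝ) (b B : Fin N2 → ℝ)
    (ha : ∀ k, 0 < a k) (hA : ∀ k, 0 < A k)
    (hb : ∀ l, 0 < b l) (hB : ∀ l, 0 < B l)
    (ε : ℝ) (hε : 0 < ε)
    (φ φ' φ'' : ℝ → ℝ)
    (hd1 : ∀ x ∈ Set.Icc (-1 : ℝ) 1, HasDerivWithinAt φ (φ' x) (Set.Icc (-1 : ℝ) 1) x)
    (hd2 : ∀ x ∈ Set.Icc (-1 : ℝ) 1, HasDerivWithinAt φ' (φ'' x) (Set.Icc (-1 : ℝ) 1) x)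
    (hc2 : ContinuousOn φ'' (Set.Icc (-1 : ℝ) 1))
    (hode : ∀ x ∈ Set.Ioo (-1 : ℝ) 1,
      ε ^ 2 * φ'' x =
        ∑ k, A k * Real.exp (a k * φ x) - ∑ l, B l * Real.exp (-(b l) * φ x))
    (y₁ y₂ : ℝ) (hy : -1 ≤ y₁) (hy' : y₁ < y₂) (hy'' : y₂ ≤ 1)
    (hz₁ : φ' y₁ = 0) (hz₂ : φ' y₂ = 0) :
    ∀ x ∈ Set.Icc y₁ y₂, φ' x = 0 :=
  stmt_10_general N1 N2 a A b B ha hA hb hB ε hε φ φ' φ'' hd1 hd2 hode y₁ y₂ hy hy'' hz₁ hz₂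
end

section
/- Suppose u : [-1,1] → ℝ is C², u ≥ 0, and satisfies ε² u'' ≥ 4 M² u on (-1,1) for constants ε, M > 0, with u(-1) = u(1) = U ≥ 0. Then u(x) ≤ U (e^{-M(1+x)/ε} + e^{-M(1-x)/ε}) for all x ∈ [-1,1]. -/
/-!
With `k = M / ε`, the barrier `G x = U (e^{-k(1+x)} + e^{-k(1-x)})` satisfies `G'' = k² G` and
`G (±1) ≥ U`. The difference `w = G - u` is nonnegative at `±1`, and wherever `w < 0` we have
`u > G ≥ 0`, hence `w'' = k² G - u'' ≤ k² G - 4 k² u < 0`. So `w` cannot attain a negative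
minimum in the interior, where the second derivative would have to be nonnegative.
-/

open Set Filter Topology Real

theorem IsLocalMin.deriv_deriv_nonneg {f : ℝ → ℝ} {x₀ : ℝ} (hmin : IsLocalMin f x₀)
    (hc : ContinuousAt f x₀) : 0 ≤ deriv (deriv f) x₀ := by
  by_contra! hneg
  have hmax : IsLocalMax f x₀ := isLocalMax_of_deriv_deriv_neg hneg hmin.deriv_eq_zero hc
  have hconst : f =ᶠ[𝓝 x₀] fun _ => f x₀ := by
    filter_upwards [hmin, hmax] with x h₁ h₂ using le_antisymm h₂ h₁
  refine hneg.ne ?_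
  rw [hconst.deriv.deriv_eq]
  simp

theorem IsLocalMin.nonneg_of_hasDerivAt_hasDerivAt {f f' : ℝ → ℝ} {f'' x₀ : ℝ}
    (hmin : IsLocalMin f x₀) (hf : ∀ᶠ x in 𝓝 x₀, HasDerivAt f (f' x) x)
    (hf' : HasDerivAt f' f'' x₀) : 0 ≤ f'' := by
  have hderiv : deriv f =ᶠ[𝓝 x₀] f' := hf.mono fun x hx => hx.deriv
  rw [← hf'.deriv, ← hderiv.deriv_eq]
  exact hmin.deriv_deriv_nonneg hf.self_of_nhds.continuousAt

theorem nonneg_on_Icc_of_endpoints_of_deriv2_neg {w w' w'' : ℝ → ℝ} {a b : ℝ}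
    (hw : ContinuousOn w (Icc a b)) (hw' : ∀ x ∈ Ioo a b, HasDerivAt w (w' x) x)
    (hw'' : ∀ x ∈ Ioo a b, HasDerivAt w' (w'' x) x) (ha : 0 ≤ w a) (hb : 0 ≤ w b)
    (hneg : ∀ x ∈ Ioo a b, w x < 0 → w'' x < 0) : ∀ x ∈ Icc a b, 0 ≤ w x := by
  by_contra! ⟨x, hx, hwx⟩
  obtain ⟨x₀, hx₀, hmin⟩ := isCompact_Icc.exists_isMinOn ⟨x, hx⟩ hw
  have hwx₀ : w x₀ < 0 := (hmin hx).trans_lt hwx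
  have hx₀' : x₀ ∈ Ioo a b :=
    ⟨hx₀.1.lt_of_ne (by rintro rfl; linarith), hx₀.2.lt_of_ne (by rintro rfl; linarith)⟩
  have hnhds : Ioo a b ∈ 𝓝 x₀ := Ioo_mem_nhds hx₀'.1 hx₀'.2
  have hlocal : IsLocalMin w x₀ := hmin.isLocalMin (mem_of_superset hnhds Ioo_subset_Icc_self)
  exact (hneg x₀ hx₀' hwx₀).not_ge
    (hlocal.nonneg_of_hasDerivAt_hasDerivAt (eventually_of_mem hnhds hw') (hw'' x₀ hx₀'))

theorem hasDerivAt_exp_neg_mul_one_add (k x : ℝ) :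
    HasDerivAt (fun x => exp (-k * (1 + x))) (-k * exp (-k * (1 + x))) x := by
  simpa [mul_comm] using (((hasDerivAt_id x).const_add 1).const_mul (-k)).exp

theorem hasDerivAt_exp_neg_mul_one_sub (k x : ℝ) :
    HasDerivAt (fun x => exp (-k * (1 - x))) (k * exp (-k * (1 - x))) x := by
  simpa [mul_comm] using (((hasDerivAt_id x).const_sub 1).const_mul (-k)).exp

noncomputable def expBarrier (k U x : ℝ) : ℝ := U * (exp (-k * (1 + x)) + exp (-k * (1 - x)))

theorem hasDerivAt_expBarrier (k U x : ℝ) :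
    HasDerivAt (expBarrier k U) (k * U * (exp (-k * (1 - x)) - exp (-k * (1 + x)))) x :=
  (((hasDerivAt_exp_neg_mul_one_add k x).add
    (hasDerivAt_exp_neg_mul_one_sub k x)).const_mul U).congr_deriv (by ring)

theorem hasDerivAt_deriv_expBarrier (k U x : ℝ) :
    HasDerivAt (fun x => k * U * (exp (-k * (1 - x)) - exp (-k * (1 + x))))
      (k ^ 2 * expBarrier k U x) x :=
  (((hasDerivAt_exp_neg_mul_one_sub k x).sub
    (hasDerivAt_exp_neg_mul_one_add k x)).const_mul (k * U)).congr_deriv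
    (by rw [expBarrier]; ring)

theorem expBarrier_nonneg (k : ℝ) {U : ℝ} (hU : 0 ≤ U) (x : ℝ) : 0 ≤ expBarrier k U x := by
  unfold expBarrier
  positivity

theorem stmt_13_general (ε M U : ℝ) (hε : 0 < ε) (hM : 0 < M) (hU : 0 ≤ U)
    (u u' u'' : ℝ → ℝ)
    (hd1 : ∀ x ∈ Set.Icc (-1 : ℝ) 1, HasDerivWithinAt u (u' x) (Set.Icc (-1 : ℝ) 1) x)
    (hd2 : ∀ x ∈ Set.Icc (-1 : ℝ) 1, HasDerivWithinAt u' (u'' x) (Set.Icc (-1 : ℝ) 1) x)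
    (hineq : ∀ x ∈ Set.Ioo (-1 : ℝ) 1, 4 * M ^ 2 * u x ≤ ε ^ 2 * u'' x)
    (hb1 : u (-1) = U) (hb2 : u 1 = U) :
    ∀ x ∈ Set.Icc (-1 : ℝ) 1,
      u x ≤ U * (Real.exp (-M * (1 + x) / ε) + Real.exp (-M * (1 - x) / ε)) := by
  set k := M / ε with hk
  have hM_eq : M = k * ε := (div_mul_cancel₀ M hε.ne').symm
  have hinterior : ∀ x ∈ Ioo (-1 : ℝ) 1, Icc (-1 : ℝ) 1 ∈ 𝓝 x :=
    fun x hx => Icc_mem_nhds hx.1 hx.2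
  have hcomparison : ∀ x ∈ Icc (-1 : ℝ) 1, 0 ≤ expBarrier k U x - u x := by
    refine nonneg_on_Icc_of_endpoints_of_deriv2_neg
      (fun x hx => (hasDerivAt_expBarrier k U x).continuousAt.continuousWithinAt.sub
        (hd1 x hx).continuousWithinAt)
      (fun x hx => (hasDerivAt_expBarrier k U x).sub
        ((hd1 x (Ioo_subset_Icc_self hx)).hasDerivAt (hinterior x hx)))
      (fun x hx => (hasDerivAt_deriv_expBarrier k U x).sub
        ((hd2 x (Ioo_subset_Icc_self hx)).hasDerivAt (hinterior x hx))) ?_ ?_ ?_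
    · simp only [expBarrier, hb1]
      norm_num
      nlinarith [exp_pos (-(k * 2))]
    · simp only [expBarrier, hb2]
      norm_num
      nlinarith [exp_pos (-(k * 2))]
    · intro x hx hneg
      have hu'' : 4 * k ^ 2 * u x ≤ u'' x := by
        have := hineq x hx
        rw [hM_eq] at this
        nlinarith [pow_pos hε 2]
      nlinarith [expBarrier_nonneg k hU x, pow_pos (div_pos hM hε) 2]
  intro x hx
  have hbarrier : expBarrier k U x = U * (exp (-M * (1 + x) / ε) + exp (-M * (1 - x) / ε)) := by
    rw [expBarrier, hk]
    ring_nf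
  linarith [hcomparison x hx]

/-- Comparison estimate: if ε² u'' ≥ 4M² u, u ≥ 0, u(±1) = U, then
u(x) ≤ U (e^{-M(1+x)/ε} + e^{-M(1-x)/ε}). -/
theorem stmt_13 (ε M U : ℝ) (hε : 0 < ε) (hM : 0 < M) (hU : 0 ≤ U)
    (u u' u'' : ℝ → ℝ)
    (hd1 : ∀ x ∈ Set.Icc (-1 : ℝ) 1, HasDerivWithinAt u (u' x) (Set.Icc (-1 : ℝ) 1) x)
    (hd2 : ∀ x ∈ Set.Icc (-1 : ℝ) 1, HasDerivWithinAt u' (u'' x) (Set.Icc (-1 : ℝ) 1) x)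
    (hc2 : ContinuousOn u'' (Set.Icc (-1 : ℝ) 1))
    (hpos : ∀ x ∈ Set.Icc (-1 : ℝ) 1, 0 ≤ u x)
    (hineq : ∀ x ∈ Set.Ioo (-1 : ℝ) 1, 4 * M ^ 2 * u x ≤ ε ^ 2 * u'' x)
    (hb1 : u (-1) = U) (hb2 : u 1 = U) :
    ∀ x ∈ Set.Icc (-1 : ℝ) 1,
      u x ≤ U * (Real.exp (-M * (1 + x) / ε) + Real.exp (-M * (1 - x) / ε)) :=
  stmt_13_general ε M U hε hM hU u u' u'' hd1 hd2 hineq hb1 hb2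
end

section
/- Under global electroneutrality, C₅ := inf_{s ≠ 0} s^{-1}(Σ_{k=1}^{N1} a_k α_k e^{a_k s} - Σ_{l=1}^{N2} b_l β_l e^{-b_l s}) is a strictly positive real number. -/
/-- Under global electroneutrality, C₅ = inf_{s≠0} s⁻¹ f'(s) is strictly positive. -/
theorem stmt_14 (N1 N2 : ℕ) (hN1 : 0 < N1) (hN2 : 0 < N2)
    (a α : Fin N1 → ℝ) (b β : Fin N2 → ℝ)
    (ha : ∀ k, 0 < a k) (hα : ∀ k, 0 < α k)
    (hb : ∀ l, 0 < b l) (hβ : ∀ l, 0 < β l)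
    (hneu : ∑ k, a k * α k = ∑ l, b l * β l) :
    0 < sInf {y : ℝ | ∃ s : ℝ, s ≠ 0 ∧
      y = s⁻¹ * ((∑ k, a k * α k * Real.exp (a k * s))
                  - ∑ l, b l * β l * Real.exp (-(b l) * s))} := by
  have hne1 : Nonempty (Fin N1) := Fin.pos_iff_nonempty.mp hN1
  have hne2 : Nonempty (Fin N2) := Fin.pos_iff_nonempty.mp hN2
  set A := ∑ k, (a k)^2 * α k with hA
  set B := ∑ l, (b l)^2 * β l with hB
  have hApos : 0 < A := Finset.sum_pos (fun k _ => mul_pos (pow_pos (ha k) 2) (hα k)) Finset.univ_nonempty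
  have hBpos : 0 < B := Finset.sum_pos (fun l _ => mul_pos (pow_pos (hb l) 2) (hβ l)) Finset.univ_nonempty
  have hmin : 0 < min A B := lt_min hApos hBpos
  refine lt_of_lt_of_le hmin (le_csInf ⟨_, 1, one_ne_zero, rfl⟩ ?_)
  rintro y ⟨s, hs, rfl⟩
  -- rewrite using neutrality
  set X := (∑ k, a k * α k * Real.exp (a k * s)) - ∑ l, b l * β l * Real.exp (-(b l) * s) with hX
  have hsplit : X = (∑ k, a k * α k * (Real.exp (a k * s) - 1))
      + ∑ l, b l * β l * (1 - Real.exp (-(b l) * s)) := by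
    have h1 : ∑ k, a k * α k * (Real.exp (a k * s) - 1)
        = (∑ k, a k * α k * Real.exp (a k * s)) - ∑ k, a k * α k := by
      rw [← Finset.sum_sub_distrib]; exact Finset.sum_congr rfl fun k _ => by ring
    have h2 : ∑ l, b l * β l * (1 - Real.exp (-(b l) * s))
        = (∑ l, b l * β l) - ∑ l, b l * β l * Real.exp (-(b l) * s) := by
      rw [← Finset.sum_sub_distrib]; exact Finset.sum_congr rfl fun l _ => by ring
    rw [h1, h2, hX]; linarith
  have hinv : s⁻¹ * X = X / s := by ring
  rcases hs.lt_or_gt with hneg | hpos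
  · -- s < 0 : show min A B ≤ X / s using X ≤ B * s
    have hXle : X ≤ B * s := by
      rw [hsplit]
      have hk : ∑ k, a k * α k * (Real.exp (a k * s) - 1) ≤ 0 := by
        apply Finset.sum_nonpos
        intro k _
        have h1 : Real.exp (a k * s) ≤ 1 := Real.exp_le_one_iff.mpr
          (mul_nonpos_of_nonneg_of_nonpos (ha k).le hneg.le)
        exact mul_nonpos_of_nonneg_of_nonpos
          (mul_nonneg (ha k).le (hα k).le) (by linarith)
      have hl : ∑ l, b l * β l * (1 - Real.exp (-(b l) * s)) ≤ B * s := by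
        rw [hB, Finset.sum_mul]
        apply Finset.sum_le_sum
        intro l _
        have hexp : 1 + (-(b l) * s) ≤ Real.exp (-(b l) * s) := by
          have := Real.add_one_le_exp (-(b l) * s); linarith
        have h3 : 1 - Real.exp (-(b l) * s) ≤ b l * s := by linarith
        calc b l * β l * (1 - Real.exp (-(b l) * s)) ≤ b l * β l * (b l * s) :=
              mul_le_mul_of_nonneg_left h3 (mul_nonneg (hb l).le (hβ l).le)
        _ = b l ^ 2 * β l * s := by ring
      linarith
    rw [hinv, le_div_iff_of_neg hneg]
    calc X ≤ B * s := hXle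
    _ ≤ min A B * s := by
      have := min_le_right A B
      nlinarith
  · -- s > 0 : show min A B ≤ X / s using A * s ≤ X
    have hXge : A * s ≤ X := by
      rw [hsplit]
      have hk : A * s ≤ ∑ k, a k * α k * (Real.exp (a k * s) - 1) := by
        rw [hA, Finset.sum_mul]
        apply Finset.sum_le_sum
        intro k _
        have hexp : 1 + (a k * s) ≤ Real.exp (a k * s) := by
          have := Real.add_one_le_exp (a k * s); linarith
        have h3 : a k * s ≤ Real.exp (a k * s) - 1 := by linarith
        calc a k ^ 2 * α k * s = a k * α k * (a k * s) := by ring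
        _ ≤ a k * α k * (Real.exp (a k * s) - 1) :=
              mul_le_mul_of_nonneg_left h3 (mul_nonneg (ha k).le (hα k).le)
      have hl : 0 ≤ ∑ l, b l * β l * (1 - Real.exp (-(b l) * s)) := by
        apply Finset.sum_nonneg
        intro l _
        have h1 : Real.exp (-(b l) * s) ≤ 1 := Real.exp_le_one_iff.mpr (by
          have := (hb l).le; nlinarith)
        exact mul_nonneg (mul_nonneg (hb l).le (hβ l).le) (by linarith)
      linarith
    rw [hinv, le_div_iff₀ hpos]
    calc min A B * s ≤ A * s := by
          have := min_le_left A B; nlinarith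
    _ ≤ X := hXge
end

section
/- Assume global electroneutrality and let φ₀⁺ > 0, γ ≥ 0. There exists a unique real number t̂ satisfying |φ₀⁺ - t̂| = γ (f(t̂) - f(0))^{1/2} and 0 ≤ t̂ ≤ φ₀⁺. Moreover t̂ = t̂(γ) is nonincreasing in γ on [0, ∞). -/
/-- For the classical PB equation: for each γ ≥ 0 there is a unique t̂ with
|φ₀⁺ - t̂| = γ√(f(t̂) - f(0)) and 0 ≤ t̂ ≤ φ₀⁺, and t̂(γ) is nonincreasing in γ. -/
theorem stmt_15 (N1 N2 : ℕ) (hN1 : 0 < N1) (hN2 : 0 < N2)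
    (a α : Fin N1 → ℝ) (b β : Fin N2 → ℝ)
    (ha : ∀ k, 0 < a k) (hα : ∀ k, 0 < α k)
    (hb : ∀ l, 0 < b l) (hβ : ∀ l, 0 < β l)
    (hneu : ∑ k, a k * α k = ∑ l, b l * β l)
    (f : ℝ → ℝ)
    (hf : ∀ s, f s = ∑ k, α k * Real.exp (a k * s) + ∑ l, β l * Real.exp (-(b l) * s))
    (φ₀ : ℝ) (hφ₀ : 0 < φ₀) :
    (∀ γ : ℝ, 0 ≤ γ →
      ∃! t : ℝ, |φ₀ - t| = γ * Real.sqrt (f t - f 0) ∧ 0 ≤ t ∧ t ≤ φ₀) ∧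
    (∀ γ₁ γ₂ t₁ t₂ : ℝ, 0 ≤ γ₁ → γ₁ ≤ γ₂ →
      |φ₀ - t₁| = γ₁ * Real.sqrt (f t₁ - f 0) → 0 ≤ t₁ → t₁ ≤ φ₀ →
      |φ₀ - t₂| = γ₂ * Real.sqrt (f t₂ - f 0) → 0 ≤ t₂ → t₂ ≤ φ₀ →
      t₂ ≤ t₁) := by
  -- f is nondecreasing on [0, ∞)
  have hmono : ∀ s t : ℝ, 0 ≤ s → s ≤ t → f s ≤ f t := by
    intro s t hs hst
    rw [hf, hf]
    have h1 : ∀ k : Fin N1,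
        α k * Real.exp (a k * s) + a k * α k * (t - s) ≤ α k * Real.exp (a k * t) := by
      intro k
      have he : Real.exp (a k * s) * (1 + a k * (t - s)) ≤ Real.exp (a k * t) := by
        have h := Real.add_one_le_exp (a k * (t - s))
        have hnn := Real.exp_nonneg (a k * s)
        calc Real.exp (a k * s) * (1 + a k * (t - s))
            ≤ Real.exp (a k * s) * Real.exp (a k * (t - s)) :=
              mul_le_mul_of_nonneg_left (by linarith) hnn
          _ = Real.exp (a k * t) := by rw [← Real.exp_add]; ring_nf
      have h2 : (1:ℝ) ≤ Real.exp (a k * s) :=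
        Real.one_le_exp (mul_nonneg (ha k).le hs)
      have h3 : 0 ≤ a k * (t - s) := mul_nonneg (ha k).le (by linarith)
      have h4 : Real.exp (a k * s) + a k * (t - s) ≤ Real.exp (a k * t) := by
        nlinarith [he, mul_le_mul_of_nonneg_right h2 h3]
      nlinarith [mul_le_mul_of_nonneg_left h4 (hα k).le]
    have h2 : ∀ l : Fin N2,
        β l * Real.exp (-(b l) * s) - b l * β l * (t - s) ≤ β l * Real.exp (-(b l) * t) := by
      intro l
      have he : Real.exp (-(b l) * s) * (1 - b l * (t - s)) ≤ Real.exp (-(b l) * t) := by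
        have h := Real.add_one_le_exp (-(b l) * (t - s))
        have hnn := Real.exp_nonneg (-(b l) * s)
        calc Real.exp (-(b l) * s) * (1 - b l * (t - s))
            ≤ Real.exp (-(b l) * s) * Real.exp (-(b l) * (t - s)) :=
              mul_le_mul_of_nonneg_left (by nlinarith) hnn
          _ = Real.exp (-(b l) * t) := by rw [← Real.exp_add]; ring_nf
      have h2 : Real.exp (-(b l) * s) ≤ 1 := by
        rw [Real.exp_le_one_iff]
        nlinarith [(hb l).le]
      have h3 : 0 ≤ b l * (t - s) := mul_nonneg (hb l).le (by linarith)
      have h4 : Real.exp (-(b l) * s) - b l * (t - s) ≤ Real.exp (-(b l) * t) := by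
        nlinarith [he, mul_le_mul_of_nonneg_right h2 h3]
      nlinarith [mul_le_mul_of_nonneg_left h4 (hβ l).le]
    have hA : ∑ k, (α k * Real.exp (a k * s) + a k * α k * (t - s))
        ≤ ∑ k, α k * Real.exp (a k * t) := Finset.sum_le_sum fun k _ => h1 k
    have hB : ∑ l, (β l * Real.exp (-(b l) * s) - b l * β l * (t - s))
        ≤ ∑ l, β l * Real.exp (-(b l) * t) := Finset.sum_le_sum fun l _ => h2 l
    rw [Finset.sum_add_distrib, ← Finset.sum_mul] at hA
    rw [Finset.sum_sub_distrib, ← Finset.sum_mul] at hB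
    rw [hneu] at hA
    linarith [hA, hB]
  have hfc : Continuous f := by
    have hfe : f = fun s => ∑ k, α k * Real.exp (a k * s) + ∑ l, β l * Real.exp (-(b l) * s) :=
      funext hf
    rw [hfe]
    exact (continuous_finset_sum _ fun k _ =>
        continuous_const.mul (Real.continuous_exp.comp (continuous_const.mul continuous_id))).add
      (continuous_finset_sum _ fun l _ =>
        continuous_const.mul (Real.continuous_exp.comp (continuous_const.mul continuous_id)))
  have key : ∀ γ₁ γ₂ t₁ t₂ : ℝ, 0 ≤ γ₁ → γ₁ ≤ γ₂ →
      |φ₀ - t₁| = γ₁ * Real.sqrt (f t₁ - f 0) → 0 ≤ t₁ → t₁ ≤ φ₀ →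
      |φ₀ - t₂| = γ₂ * Real.sqrt (f t₂ - f 0) → 0 ≤ t₂ → t₂ ≤ φ₀ →
      t₂ ≤ t₁ := by
    intro γ₁ γ₂ t₁ t₂ hγ₁ h12 he₁ ht₁0 ht₁φ he₂ ht₂0 ht₂φ
    by_contra hcon
    push_neg at hcon
    rw [abs_of_nonneg (by linarith)] at he₁
    rw [abs_of_nonneg (by linarith)] at he₂
    have hmf : f t₁ ≤ f t₂ := hmono t₁ t₂ ht₁0 hcon.le
    have hs : γ₁ * Real.sqrt (f t₁ - f 0) ≤ γ₂ * Real.sqrt (f t₂ - f 0) :=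
      mul_le_mul h12 (Real.sqrt_le_sqrt (by linarith)) (Real.sqrt_nonneg _) (by linarith)
    linarith
  refine ⟨fun γ hγ => ?_, key⟩
  set g : ℝ → ℝ := fun t => t + γ * Real.sqrt (f t - f 0) with hgdef
  have hgc : Continuous g :=
    continuous_id.add (continuous_const.mul ((hfc.sub continuous_const).sqrt))
  have hg0 : g 0 = 0 := by simp [hgdef]
  have hgφ : φ₀ ≤ g φ₀ := by
    have := mul_nonneg hγ (Real.sqrt_nonneg (f φ₀ - f 0))
    simp only [hgdef]
    linarith
  have hmem : φ₀ ∈ Set.Icc (g 0) (g φ₀) := ⟨by rw [hg0]; exact hφ₀.le, hgφ⟩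
  obtain ⟨t, htmem, hgt⟩ := intermediate_value_Icc hφ₀.le hgc.continuousOn hmem
  have heq : φ₀ - t = γ * Real.sqrt (f t - f 0) := by
    simp only [hgdef] at hgt
    linarith
  have hnn : 0 ≤ φ₀ - t := heq ▸ mul_nonneg hγ (Real.sqrt_nonneg _)
  have habs : |φ₀ - t| = γ * Real.sqrt (f t - f 0) := by rw [abs_of_nonneg hnn]; exact heq
  refine ⟨t, ⟨habs, htmem.1, htmem.2⟩, ?_⟩
  intro y ⟨hy1, hy2, hy3⟩
  exact le_antisymm (key γ γ t y hγ le_rfl habs htmem.1 htmem.2 hy1 hy2 hy3)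
    (key γ γ y t hγ le_rfl hy1 hy2 hy3 habs htmem.1 htmem.2)
end

section
/- Let φ : [-1,1] → ℝ be differentiable with |φ'(x)| ≤ (C/ε²)(e^{-M(1+x)/ε} + e^{-M(1-x)/ε}) for constants C, M, ε > 0 with φ'(0) defined, and let 0 < κ < 1. Then for all x, y ∈ [-1+ε^κ, 1-ε^κ], |φ(x) - φ(y)| ≤ (4C/(Mε)) e^{-M ε^{κ-1}}. In particular sup_{x,y ∈ [-1+ε^κ, 1-ε^κ]} |φ(x) - φ(y)| → 0 as ε → 0. -/
/-!
If `|f'| ≤ G'` on `[a, b]`, then `f` oscillates on `[a, b]` by at most `G b - G a`.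
For the boundary-layer bound `C ε⁻² (e^{-M(1+x)/ε} + e^{-M(1-x)/ε})` one can take
`G x = C/(Mε) (e^{-M(1-x)/ε} - e^{-M(1+x)/ε})`, whose increase over `[-1+δ, 1-δ]` is at most
`2C/(Mε) e^{-Mδ/ε}`. With `δ = ε^κ` this is `(2C/M) ε⁻¹ e^{-M ε^{κ-1}}`, which tends to `0`
because `u = ε^{κ-1} → ∞` and `ε⁻¹ = u^{1/(1-κ)}` grows only polynomially in `u`.
-/

open Set Filter Topology

theorem abs_sub_le_sub_of_abs_deriv_le {f f' G G' : ℝ → ℝ} {a b : ℝ}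
    (hf : ∀ x ∈ Icc a b, HasDerivWithinAt f (f' x) (Icc a b) x)
    (hG : ∀ x ∈ Icc a b, HasDerivWithinAt G (G' x) (Icc a b) x)
    (hbound : ∀ x ∈ Icc a b, |f' x| ≤ G' x) {x y : ℝ} (hy : y ∈ Icc a b) (hx : x ∈ Icc a b)
    (hyx : y ≤ x) : |f x - f y| ≤ G x - G y := by
  have hsub : Icc y b ⊆ Icc a b := Icc_subset_Icc_left hy.1
  have hasDerivWithinAt_Ici {F F' : ℝ → ℝ}
      (hF : ∀ x ∈ Icc a b, HasDerivWithinAt F (F' x) (Icc a b) x) (z : ℝ)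
      (hz : z ∈ Ico y b) : HasDerivWithinAt F (F' z) (Ici z) z :=
    (hF z (hsub (Ico_subset_Icc_self hz))).mono_of_mem_nhdsWithin <|
      mem_of_superset (Icc_mem_nhdsGE hz.2) (Icc_subset_Icc_left (hy.1.trans hz.1))
  have continuousOn {F F' : ℝ → ℝ}
      (hF : ∀ x ∈ Icc a b, HasDerivWithinAt F (F' x) (Icc a b) x) : ContinuousOn F (Icc y b) :=
    fun z hz => (hF z (hsub hz)).continuousWithinAt.mono hsub
  simpa [Real.norm_eq_abs] using image_norm_le_of_norm_deriv_right_le_deriv_boundary'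
    (f := fun t => f t - f y) (B := fun t => G t - G y)
    ((continuousOn hf).sub continuousOn_const)
    (fun z hz => (hasDerivWithinAt_Ici hf z hz).sub_const _) (by simp)
    ((continuousOn hG).sub continuousOn_const)
    (fun z hz => (hasDerivWithinAt_Ici hG z hz).sub_const _)
    (fun z hz => by simpa using hbound z (hsub (Ico_subset_Icc_self hz))) ⟨hyx, hx.2⟩

theorem abs_sub_le_of_abs_deriv_le {f f' G G' : ℝ → ℝ} {a b : ℝ}
    (hf : ∀ x ∈ Icc a b, HasDerivWithinAt f (f' x) (Icc a b) x)
    (hG : ∀ x ∈ Icc a b, HasDerivWithinAt G (G' x) (Icc a b) x)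
    (hbound : ∀ x ∈ Icc a b, |f' x| ≤ G' x) {x y : ℝ} (hx : x ∈ Icc a b) (hy : y ∈ Icc a b) :
    |f x - f y| ≤ G b - G a := by
  have key {u v : ℝ} (hu : u ∈ Icc a b) (hv : v ∈ Icc a b) (huv : u ≤ v) :
      |f v - f u| ≤ G b - G a := by
    have ha : a ∈ Icc a b := ⟨le_rfl, hu.1.trans hu.2⟩
    have hb : b ∈ Icc a b := ⟨hu.1.trans hu.2, le_rfl⟩
    -- `G` is monotone, by the same estimate applied to the pairs `(a, u)` and `(v, b)`
    have hG_a := (abs_nonneg _).trans (abs_sub_le_sub_of_abs_deriv_le hf hG hbound ha hu hu.1)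
    have hG_b := (abs_nonneg _).trans (abs_sub_le_sub_of_abs_deriv_le hf hG hbound hv hb hv.2)
    linarith [abs_sub_le_sub_of_abs_deriv_le hf hG hbound hu hv huv]
  rcases le_total y x with h | h
  · exact key hy hx h
  · rw [abs_sub_comm]; exact key hx hy h

noncomputable def boundaryLayerPrimitive (C M ε t : ℝ) : ℝ :=
  C / (M * ε) * (Real.exp (-M * (1 - t) / ε) - Real.exp (-M * (1 + t) / ε))

theorem hasDerivAt_boundaryLayerPrimitive (C : ℝ) {M ε : ℝ} (hM : M ≠ 0) (hε : ε ≠ 0) (t : ℝ) :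
    HasDerivAt (boundaryLayerPrimitive C M ε)
      (C / ε ^ 2 * (Real.exp (-M * (1 + t) / ε) + Real.exp (-M * (1 - t) / ε))) t := by
  have hl : HasDerivAt (fun t : ℝ => -M * (1 - t) / ε) (M / ε) t := by
    simpa using (((hasDerivAt_id t).const_sub 1).const_mul (-M)).div_const ε
  have hr : HasDerivAt (fun t : ℝ => -M * (1 + t) / ε) (-M / ε) t := by
    simpa using (((hasDerivAt_id t).const_add 1).const_mul (-M)).div_const ε
  refine ((hl.exp.sub hr.exp).const_mul (C / (M * ε))).congr_deriv ?_
  field_simp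
  ring

theorem boundaryLayerPrimitive_sub_le {C M ε : ℝ} (hC : 0 ≤ C) (hM : 0 < M) (hε : 0 < ε)
    (δ : ℝ) :
    boundaryLayerPrimitive C M ε (1 - δ) - boundaryLayerPrimitive C M ε (-1 + δ) ≤
      2 * C / (M * ε) * Real.exp (-M * δ / ε) := by
  have hfar : 0 < Real.exp (-M * (2 - δ) / ε) := Real.exp_pos _
  have hcoef : 0 ≤ C / (M * ε) := by positivity
  have hsub : boundaryLayerPrimitive C M ε (1 - δ) - boundaryLayerPrimitive C M ε (-1 + δ) =
      2 * C / (M * ε) * (Real.exp (-M * δ / ε) - Real.exp (-M * (2 - δ) / ε)) := by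
    simp only [boundaryLayerPrimitive]
    ring_nf
  rw [hsub, mul_div_assoc]
  nlinarith

theorem abs_sub_le_of_abs_deriv_le_boundaryLayer {C M ε δ : ℝ} (hC : 0 ≤ C) (hM : 0 < M)
    (hε : 0 < ε) (hδ : 0 ≤ δ) {φ φ' : ℝ → ℝ}
    (hφ : ∀ x ∈ Icc (-1 : ℝ) 1, HasDerivWithinAt φ (φ' x) (Icc (-1 : ℝ) 1) x)
    (hbound : ∀ x ∈ Icc (-1 : ℝ) 1,
      |φ' x| ≤ C / ε ^ 2 * (Real.exp (-M * (1 + x) / ε) + Real.exp (-M * (1 - x) / ε)))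
    {x y : ℝ} (hx : x ∈ Icc (-1 + δ) (1 - δ)) (hy : y ∈ Icc (-1 + δ) (1 - δ)) :
    |φ x - φ y| ≤ 2 * C / (M * ε) * Real.exp (-M * δ / ε) := by
  have hsub : Icc (-1 + δ) (1 - δ) ⊆ Icc (-1) 1 := Icc_subset_Icc (by linarith) (by linarith)
  refine (abs_sub_le_of_abs_deriv_le (fun z hz => (hφ z (hsub hz)).mono hsub)
    (fun z _ => (hasDerivAt_boundaryLayerPrimitive C hM.ne' hε.ne' z).hasDerivWithinAt)
    (fun z hz => hbound z (hsub hz)) hx hy).trans ?_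
  exact boundaryLayerPrimitive_sub_le hC hM hε δ

theorem tendsto_inv_mul_exp_neg_mul_rpow_nhdsGT_zero {M p : ℝ} (hM : 0 < M) (hp : p < 0) :
    Tendsto (fun ε : ℝ => ε⁻¹ * Real.exp (-M * ε ^ p)) (𝓝[>] 0) (𝓝 0) := by
  have h := (tendsto_rpow_mul_exp_neg_mul_atTop_nhds_zero (-p⁻¹) M hM).comp
    (tendsto_rpow_neg_nhdsGT_zero hp)
  refine h.congr' ?_
  filter_upwards [self_mem_nhdsWithin] with ε (hε : 0 < ε)
  rw [Function.comp_apply, ← Real.rpow_mul hε.le, mul_neg, mul_inv_cancel₀ hp.ne,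
    Real.rpow_neg_one]

theorem stmt_17_general (C M κ : ℝ) (hC : 0 < C) (hM : 0 < M) (hκ₁ : κ < 1)
    (φ : ℝ → ℝ → ℝ)
    (hdiff : ∀ ε : ℝ, ε ∈ Set.Ioo (0 : ℝ) 1 →
      ∀ x ∈ Set.Icc (-1 : ℝ) 1, HasDerivWithinAt (φ ε) (deriv (φ ε) x) (Set.Icc (-1 : ℝ) 1) x)
    (hbound : ∀ ε : ℝ, ε ∈ Set.Ioo (0 : ℝ) 1 → ∀ x ∈ Set.Icc (-1 : ℝ) 1,
      |deriv (φ ε) x| ≤ C / ε ^ 2 *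
        (Real.exp (-M * (1 + x) / ε) + Real.exp (-M * (1 - x) / ε))) :
    (∀ ε : ℝ, ε ∈ Set.Ioo (0 : ℝ) 1 →
      ∀ x ∈ Set.Icc (-1 + ε ^ κ) (1 - ε ^ κ), ∀ y ∈ Set.Icc (-1 + ε ^ κ) (1 - ε ^ κ),
        |φ ε x - φ ε y| ≤ 4 * C / (M * ε) * Real.exp (-M * ε ^ (κ - 1))) ∧
    Filter.Tendsto (fun ε : ℝ => 4 * C / (M * ε) * Real.exp (-M * ε ^ (κ - 1)))
      (nhdsWithin 0 (Set.Ioi 0)) (nhds 0) := by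
  constructor
  · intro ε hε x hx y hy
    have hexp : -M * ε ^ κ / ε = -M * ε ^ (κ - 1) := by
      rw [mul_div_assoc, Real.rpow_sub_one hε.1.ne']
    calc |φ ε x - φ ε y| ≤ 2 * C / (M * ε) * Real.exp (-M * ε ^ κ / ε) :=
          abs_sub_le_of_abs_deriv_le_boundaryLayer hC.le hM hε.1
            (Real.rpow_nonneg hε.1.le κ) (hdiff ε hε) (hbound ε hε) hx hy
      _ ≤ 4 * C / (M * ε) * Real.exp (-M * ε ^ (κ - 1)) := by
          rw [hexp]
          have : 0 < M * ε := mul_pos hM hε.1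
          gcongr
          norm_num
  · have h := (tendsto_inv_mul_exp_neg_mul_rpow_nhdsGT_zero hM (sub_neg.2 hκ₁)).const_mul
      (4 * C / M)
    rw [mul_zero] at h
    refine h.congr fun ε => ?_
    rw [← mul_assoc, ← div_eq_mul_inv, div_div]

/-- Interior flatness: from the exponential gradient bound we get an oscillation
bound on [-1+ε^κ, 1-ε^κ] that tends to 0 as ε → 0. -/
theorem stmt_17 (C M κ : ℝ) (hC : 0 < C) (hM : 0 < M) (hκ₀ : 0 < κ) (hκ₁ : κ < 1)
    (φ : ℝ → ℝ → ℝ)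
    (hdiff : ∀ ε : ℝ, ε ∈ Set.Ioo (0 : ℝ) 1 →
      ∀ x ∈ Set.Icc (-1 : ℝ) 1, HasDerivWithinAt (φ ε) (deriv (φ ε) x) (Set.Icc (-1 : ℝ) 1) x)
    (hbound : ∀ ε : ℝ, ε ∈ Set.Ioo (0 : ℝ) 1 → ∀ x ∈ Set.Icc (-1 : ℝ) 1,
      |deriv (φ ε) x| ≤ C / ε ^ 2 *
        (Real.exp (-M * (1 + x) / ε) + Real.exp (-M * (1 - x) / ε))) :
    (∀ ε : ℝ, ε ∈ Set.Ioo (0 : ℝ) 1 →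
      ∀ x ∈ Set.Icc (-1 + ε ^ κ) (1 - ε ^ κ), ∀ y ∈ Set.Icc (-1 + ε ^ κ) (1 - ε ^ κ),
        |φ ε x - φ ε y| ≤ 4 * C / (M * ε) * Real.exp (-M * ε ^ (κ - 1))) ∧
    Filter.Tendsto (fun ε : ℝ => 4 * C / (M * ε) * Real.exp (-M * ε ^ (κ - 1)))
      (nhdsWithin 0 (Set.Ioi 0)) (nhds 0) :=
  stmt_17_general C M κ hC hM hκ₁ φ hdiff hbound
end
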